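/- arXiv:math/0509542 — 6 statements merged into one kernel-verified Lean document; each statement's English description precedes it below -/
import Mathlib

section
/- Let R be a ring and Γ a totally ordered abelian group, and let FR be an exhaustive Γ-separated filtration on R (an increasing family of additive subgroups F_γR indexed by Γ with F_γR·F_δR ⊆ F_{γ+δ}R and 1 ∈ F_0R). If the associated graded ring G_F(R) = ⊕_γ F_γR/F_{<γ}R is a domain, then R is a domain. -/
/-- `F_{<γ}R = Σ_{γ' < γ} F_{γ'}R`, the sum of the lower filtration pieces. -/
def fbelow {R : Type*} [Ring R] {Γ : Type*} [AddCommGroup Γ] [LinearOrder Γ] [IsOrderedAddMonoid Γ]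
    (F : Γ → AddSubgroup R) (γ : Γ) : AddSubgroup R :=
  ⨆ γ' ∈ Set.Iio γ, F γ'

theorem stmt0_general {R : Type*} [Ring R] {Γ : Type*} [AddCommGroup Γ] [LinearOrder Γ] [IsOrderedAddMonoid Γ]
    (F : Γ → AddSubgroup R)
    (hsep : ∀ a : R, a ≠ 0 → ∃ γ : Γ, a ∈ F γ ∧ a ∉ fbelow F γ)
    (hdom : ∀ {γ δ : Γ} {a b : R}, a ∈ F γ → a ∉ fbelow F γ →
      b ∈ F δ → b ∉ fbelow F δ → a * b ∉ fbelow F (γ + δ)) :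
    ∀ a b : R, a * b = 0 → a = 0 ∨ b = 0 := by
  intro a b hab
  by_contra! ⟨ha, hb⟩
  obtain ⟨γ, haγ, ha_below⟩ := hsep a ha
  obtain ⟨δ, hbδ, hb_below⟩ := hsep b hb
  -- the product of the principal symbols of `a` and `b` is the class of `a * b = 0`
  exact hdom haγ ha_below hbδ hb_below (hab ▸ (fbelow F (γ + δ)).zero_mem)

/-- If `FR` is an exhaustive `Γ`-separated filtration on a ring `R` whose associated
graded ring `G_F(R)` is a domain (products of nonzero homogeneous symbols are nonzero),
then `R` is a domain. -/
theorem stmt0 {R : Type*} [Ring R] {Γ : Type*} [AddCommGroup Γ] [LinearOrder Γ] [IsOrderedAddMonoid Γ]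
    (F : Γ → AddSubgroup R)
    (hmono : Monotone F)
    (hmul : ∀ {γ δ : Γ} {a b : R}, a ∈ F γ → b ∈ F δ → a * b ∈ F (γ + δ))
    (hone : (1 : R) ∈ F 0)
    (hexh : ∀ a : R, ∃ γ : Γ, a ∈ F γ)
    (hsep : ∀ a : R, a ≠ 0 → ∃ γ : Γ, a ∈ F γ ∧ a ∉ fbelow F γ)
    (hdom : ∀ {γ δ : Γ} {a b : R}, a ∈ F γ → a ∉ fbelow F γ →
      b ∈ F δ → b ∉ fbelow F δ → a * b ∉ fbelow F (γ + δ)) :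
    ∀ a b : R, a * b = 0 → a = 0 ∨ b = 0 :=
  stmt0_general F hsep hdom
end

section
/- Let R be an Artinian ring with an exhaustive Γ-separated filtration FR (Γ a totally ordered abelian group). If the associated graded ring G_F(R) is a domain, then R is a division ring and for every nonzero homogeneous element σ(a) ∈ G_F(R)_γ there exists a homogeneous element of degree −γ which is a two-sided inverse of σ(a); in particular G_F(R) is a graded division ring. -/
section Degree

variable {R : Type*} [Ring R] {Γ : Type*} [AddCommGroup Γ] [LinearOrder Γ] [IsOrderedAddMonoid Γ]
  {F : Γ → AddSubgroup R}

/-- `σ(a)` is a nonzero element of `G_F(R)_γ`. -/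
def HasDegree (F : Γ → AddSubgroup R) (γ : Γ) (a : R) : Prop :=
  a ∈ F γ ∧ a ∉ fbelow F γ

lemma le_fbelow {δ γ : Γ} (h : δ < γ) : F δ ≤ fbelow F γ :=
  le_biSup F h

lemma HasDegree.ne_zero {γ : Γ} {a : R} (ha : HasDegree F γ a) : a ≠ 0 := by
  rintro rfl
  exact ha.2 (fbelow F γ).zero_mem

lemma HasDegree.unique {γ δ : Γ} {a : R} (hγ : HasDegree F γ a) (hδ : HasDegree F δ a) :
    γ = δ := by
  rcases lt_trichotomy γ δ with h | h | h
  · exact absurd (le_fbelow h hγ.1) hδ.2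
  · exact h
  · exact absurd (le_fbelow h hδ.1) hγ.2

lemma HasDegree.mul
    (hmul : ∀ {γ δ : Γ} {a b : R}, a ∈ F γ → b ∈ F δ → a * b ∈ F (γ + δ))
    (hdom : ∀ {γ δ : Γ} {a b : R}, a ∈ F γ → a ∉ fbelow F γ →
      b ∈ F δ → b ∉ fbelow F δ → a * b ∉ fbelow F (γ + δ))
    {γ δ : Γ} {a b : R} (ha : HasDegree F γ a) (hb : HasDegree F δ b) :
    HasDegree F (γ + δ) (a * b) :=
  ⟨hmul ha.1 hb.1, hdom ha.1 ha.2 hb.1 hb.2⟩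

lemma noZeroDivisors_of_hasDegree
    (hsep : ∀ a : R, a ≠ 0 → ∃ γ : Γ, a ∈ F γ ∧ a ∉ fbelow F γ)
    (hdom : ∀ {γ δ : Γ} {a b : R}, a ∈ F γ → a ∉ fbelow F γ →
      b ∈ F δ → b ∉ fbelow F δ → a * b ∉ fbelow F (γ + δ)) :
    NoZeroDivisors R where
  eq_zero_or_eq_zero_of_mul_eq_zero {a b} hab := by
    by_contra! h
    obtain ⟨γ, haF, haN⟩ := hsep a h.1
    obtain ⟨δ, hbF, hbN⟩ := hsep b h.2
    exact hdom haF haN hbF hbN (hab ▸ (fbelow F (γ + δ)).zero_mem)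

lemma hasDegree_one [Nontrivial R]
    (hmul : ∀ {γ δ : Γ} {a b : R}, a ∈ F γ → b ∈ F δ → a * b ∈ F (γ + δ))
    (hsep : ∀ a : R, a ≠ 0 → ∃ γ : Γ, a ∈ F γ ∧ a ∉ fbelow F γ)
    (hdom : ∀ {γ δ : Γ} {a b : R}, a ∈ F γ → a ∉ fbelow F γ →
      b ∈ F δ → b ∉ fbelow F δ → a * b ∉ fbelow F (γ + δ)) :
    HasDegree F 0 (1 : R) := by
  obtain ⟨γ, h1⟩ : ∃ γ, HasDegree F γ (1 : R) := hsep 1 one_ne_zero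
  have h11 : HasDegree F (γ + γ) (1 : R) := by
    simpa only [mul_one] using h1.mul hmul hdom h1
  have hγ : γ = 0 := by simpa using h1.unique h11
  exact hγ ▸ h1

end Degree

lemma IsArtinianRing.exists_mul_eq_one_and_mul_eq_one {R : Type*} [Ring R] [IsArtinianRing R]
    [NoZeroDivisors R] {a : R} (ha : a ≠ 0) : ∃ b : R, a * b = 1 ∧ b * a = 1 := by
  obtain ⟨u, rfl⟩ := isUnit_of_mem_nonZeroDivisors (mem_nonZeroDivisors_of_ne_zero ha)
  exact ⟨↑u⁻¹, u.mul_inv, u.inv_mul⟩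

theorem stmt3_general {R : Type*} [Ring R] [IsArtinian R R] {Γ : Type*} [AddCommGroup Γ] [LinearOrder Γ] [IsOrderedAddMonoid Γ]
    (F : Γ → AddSubgroup R)
    (hmul : ∀ {γ δ : Γ} {a b : R}, a ∈ F γ → b ∈ F δ → a * b ∈ F (γ + δ))
    (hsep : ∀ a : R, a ≠ 0 → ∃ γ : Γ, a ∈ F γ ∧ a ∉ fbelow F γ)
    (hdom : ∀ {γ δ : Γ} {a b : R}, a ∈ F γ → a ∉ fbelow F γ →
      b ∈ F δ → b ∉ fbelow F δ → a * b ∉ fbelow F (γ + δ)) :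
    (∀ a : R, a ≠ 0 → ∃ b : R, a * b = 1 ∧ b * a = 1) ∧
    (∀ (γ : Γ) (a : R), a ∈ F γ → a ∉ fbelow F γ →
      ∃ b : R, b ∈ F (-γ) ∧ b ∉ fbelow F (-γ) ∧
        a * b - 1 ∈ fbelow F 0 ∧ b * a - 1 ∈ fbelow F 0) := by
  have := noZeroDivisors_of_hasDegree hsep hdom
  refine ⟨fun a ha => IsArtinianRing.exists_mul_eq_one_and_mul_eq_one ha, ?_⟩
  intro γ a haF haN
  have ha : HasDegree F γ a := ⟨haF, haN⟩
  have : Nontrivial R := ⟨⟨a, 0, ha.ne_zero⟩⟩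
  obtain ⟨b, hab, hba⟩ := IsArtinianRing.exists_mul_eq_one_and_mul_eq_one ha.ne_zero
  obtain ⟨δ, hb⟩ : ∃ δ, HasDegree F δ b := hsep b (right_ne_zero_of_mul_eq_one hab)
  have hδ : γ + δ = 0 := (hab ▸ ha.mul hmul hdom hb).unique (hasDegree_one hmul hsep hdom)
  rw [eq_neg_of_add_eq_zero_right hδ] at hb
  exact ⟨b, hb.1, hb.2, by simp [hab], by simp [hba]⟩

/-- If `R` is Artinian with an exhaustive `Γ`-separated filtration whose associated graded
ring is a domain, then `R` is a division ring, and every nonzero homogeneous element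
`σ(a) ∈ G_F(R)_γ` has a homogeneous two-sided inverse of degree `-γ` (i.e. there is
`b ∈ F_{-γ}R \ F_{<-γ}R` with `ab ≡ 1` and `ba ≡ 1` modulo `F_{<0}R`); in particular
`G_F(R)` is a graded division ring. -/
theorem stmt3 {R : Type*} [Ring R] [IsArtinian R R] {Γ : Type*} [AddCommGroup Γ] [LinearOrder Γ] [IsOrderedAddMonoid Γ]
    (F : Γ → AddSubgroup R)
    (hmono : Monotone F)
    (hmul : ∀ {γ δ : Γ} {a b : R}, a ∈ F γ → b ∈ F δ → a * b ∈ F (γ + δ))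
    (hone : (1 : R) ∈ F 0)
    (hexh : ∀ a : R, ∃ γ : Γ, a ∈ F γ)
    (hsep : ∀ a : R, a ≠ 0 → ∃ γ : Γ, a ∈ F γ ∧ a ∉ fbelow F γ)
    (hdom : ∀ {γ δ : Γ} {a b : R}, a ∈ F γ → a ∉ fbelow F γ →
      b ∈ F δ → b ∉ fbelow F δ → a * b ∉ fbelow F (γ + δ)) :
    (∀ a : R, a ≠ 0 → ∃ b : R, a * b = 1 ∧ b * a = 1) ∧
    (∀ (γ : Γ) (a : R), a ∈ F γ → a ∉ fbelow F γ →
      ∃ b : R, b ∈ F (-γ) ∧ b ∉ fbelow F (-γ) ∧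
        a * b - 1 ∈ fbelow F 0 ∧ b * a - 1 ∈ fbelow F 0) :=
  stmt3_general F hmul hsep hdom
end

section
/- Let R be a ring with an exhaustive Γ-separated filtration FR (Γ a totally ordered abelian group). Suppose the associated graded ring G_F(R) is a graded division ring and F_{<0}R is contained in the Jacobson radical of F_0R. Then R is a division ring. -/
theorem exists_mul_eq_one_of_forall_ne_zero_exists_mul_eq_one {M : Type*} [MonoidWithZero M]
    (h : ∀ a : M, a ≠ 0 → ∃ c, c * a = 1) {a : M} (ha : a ≠ 0) :
    ∃ b, a * b = 1 ∧ b * a = 1 := by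
  obtain ⟨c, hca⟩ := h a ha
  have hc : c ≠ 0 := by
    rintro rfl
    exact ha (by rw [← one_mul a, ← hca, zero_mul, zero_mul])
  obtain ⟨d, hdc⟩ := h c hc
  exact ⟨c, left_inv_eq_right_inv hdc hca ▸ hdc, hca⟩

theorem exists_mul_eq_one_of_mul_sub_one_mem_fbelow {R : Type*} [Ring R] {Γ : Type*}
    [AddCommGroup Γ] [LinearOrder Γ] [IsOrderedAddMonoid Γ] {F : Γ → AddSubgroup R}
    (hone : (1 : R) ∈ F 0)
    (hjac : ∀ x ∈ fbelow F 0, ∀ y ∈ F 0, ∃ z ∈ F 0, z * (1 - y * x) = 1)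
    {a b : R} (hba : b * a - 1 ∈ fbelow F 0) : ∃ c, c * a = 1 := by
  have hx : 1 - b * a ∈ fbelow F 0 := by
    simpa only [neg_sub] using (fbelow F 0).neg_mem hba
  obtain ⟨z, -, hz⟩ := hjac _ hx 1 hone
  rw [one_mul, sub_sub_cancel] at hz
  exact ⟨z * b, by rw [mul_assoc, hz]⟩

/-- `hgrdiv` says that `G_F(R)` is a graded division ring, and `hjac` encodes
`F_{<0}R ⊆ J(F_0R)` by the characterization of the Jacobson radical of `F_0R`:
for `x ∈ F_{<0}R` and `y ∈ F_0R`, `1 - y·x` is left invertible in `F_0R`. -/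
theorem stmt7_general {R : Type*} [Ring R] {Γ : Type*} [AddCommGroup Γ] [LinearOrder Γ] [IsOrderedAddMonoid Γ]
    (F : Γ → AddSubgroup R)
    (hone : (1 : R) ∈ F 0)
    (hsep : ∀ a : R, a ≠ 0 → ∃ γ : Γ, a ∈ F γ ∧ a ∉ fbelow F γ)
    (hgrdiv : ∀ (γ : Γ) (a : R), a ∈ F γ → a ∉ fbelow F γ →
      ∃ b : R, b ∈ F (-γ) ∧ a * b - 1 ∈ fbelow F 0 ∧ b * a - 1 ∈ fbelow F 0)
    (hjac : ∀ x ∈ fbelow F 0, ∀ y ∈ F 0, ∃ z ∈ F 0, z * (1 - y * x) = 1) :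
    ∀ a : R, a ≠ 0 → ∃ b : R, a * b = 1 ∧ b * a = 1 := by
  refine fun a ha => exists_mul_eq_one_of_forall_ne_zero_exists_mul_eq_one (fun a ha => ?_) ha
  obtain ⟨γ, haγ, ha_below⟩ := hsep a ha
  obtain ⟨b, -, -, hba⟩ := hgrdiv γ a haγ ha_below
  exact exists_mul_eq_one_of_mul_sub_one_mem_fbelow hone hjac hba

/-- Let `FR` be an exhaustive `Γ`-separated filtration on `R`. If `G_F(R)` is a graded
division ring (every nonzero homogeneous symbol `σ(a)`, `a ∈ F_γR \ F_{<γ}R`, has a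
homogeneous inverse of degree `-γ`) and `F_{<0}R ⊆ J(F_0R)` (expressed by the standard
characterization of the Jacobson radical of the subring `F_0R`: for `x ∈ F_{<0}R` and
`y ∈ F_0R`, `1 - y·x` is left invertible in `F_0R`), then `R` is a division ring. -/
theorem stmt7 {R : Type*} [Ring R] [Nontrivial R] {Γ : Type*} [AddCommGroup Γ] [LinearOrder Γ] [IsOrderedAddMonoid Γ]
    (F : Γ → AddSubgroup R)
    (hmono : Monotone F)
    (hmul : ∀ {γ δ : Γ} {a b : R}, a ∈ F γ → b ∈ F δ → a * b ∈ F (γ + δ))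
    (hone : (1 : R) ∈ F 0)
    (hexh : ∀ a : R, ∃ γ : Γ, a ∈ F γ)
    (hsep : ∀ a : R, a ≠ 0 → ∃ γ : Γ, a ∈ F γ ∧ a ∉ fbelow F γ)
    (hgrdiv : ∀ (γ : Γ) (a : R), a ∈ F γ → a ∉ fbelow F γ →
      ∃ b : R, b ∈ F (-γ) ∧ a * b - 1 ∈ fbelow F 0 ∧ b * a - 1 ∈ fbelow F 0)
    (hjac : ∀ x ∈ fbelow F 0, ∀ y ∈ F 0, ∃ z ∈ F 0, z * (1 - y * x) = 1) :
    ∀ a : R, a ≠ 0 → ∃ b : R, a * b = 1 ∧ b * a = 1 :=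
  stmt7_general F hone hsep hgrdiv hjac
end

section
/- Let A be a K-algebra containing the field K, O_v ⊆ K a valuation ring, and Λ ⊆ A a subring with Λ ∩ K = O_v and K·Λ = A. Define F_γ^v A = (f_γ^v K)·Λ where f_γ^v K = {x ∈ K : v(x) ≥ −γ}. Then F_γ^v A ∩ K = f_γ^v K for every γ in the value group Γ. -/
/-! Choosing `π ∈ K` with `v π = γ` (surjectivity of `v`), multiplication by `π` maps every
generator `c·λ` of `F_γ^vA` into `O_v·Λ = Λ`, hence maps all of `F_γ^vA` into `Λ`. So if
`x ∈ K` lies in `F_γ^vA`, then `πx ∈ Λ ∩ K = O_v`, i.e. `γ + v x ≥ 0`. The other inclusion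
is `x = x·1`. -/

/-- The additive subgroup `(f_γ^vK)·S` of a `K`-algebra `A` generated by products `c·s`
with `c ∈ f_γ^vK = {c ∈ K : v c ≥ -γ}` and `s ∈ S`. -/
def scaledSet {K : Type*} (A : Type*) {Γ : Type*} [Field K] [Ring A] [Algebra K A]
    [AddCommGroup Γ] [LinearOrder Γ] [IsOrderedAddMonoid Γ] (v : K → WithTop Γ) (γ : Γ) (S : Set A) : AddSubgroup A :=
  AddSubgroup.closure {a | ∃ c : K, ∃ s ∈ S, ((-γ : Γ) : WithTop Γ) ≤ v c ∧
    a = algebraMap K A c * s}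

theorem WithTop.coe_neg_le_iff_zero_le_coe_add {Γ : Type*} [AddCommGroup Γ] [LinearOrder Γ]
    [IsOrderedAddMonoid Γ] (γ : Γ) (w : WithTop Γ) :
    ((-γ : Γ) : WithTop Γ) ≤ w ↔ 0 ≤ (γ : WithTop Γ) + w := by
  induction w with
  | top => simp
  | coe a => norm_cast; exact neg_le_iff_add_nonneg'

section scaledSet

variable {K A Γ : Type*} [Field K] [Ring A] [Algebra K A]
  [AddCommGroup Γ] [LinearOrder Γ] [IsOrderedAddMonoid Γ] {v : K → WithTop Γ}

theorem algebraMap_mem_scaledSet {S : Set A} (hS : 1 ∈ S) {γ : Γ} {x : K}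
    (hx : ((-γ : Γ) : WithTop Γ) ≤ v x) : algebraMap K A x ∈ scaledSet A v γ S :=
  AddSubgroup.subset_closure ⟨x, 1, hS, hx, (mul_one _).symm⟩

theorem algebraMap_mul_mem_of_mem_scaledSet (hmul : ∀ x y : K, v (x * y) = v x + v y)
    {Λ : Subring A} (hO : ∀ x : K, 0 ≤ v x → algebraMap K A x ∈ Λ)
    {γ : Γ} {π : K} (hπ : (γ : WithTop Γ) ≤ v π) {y : A}
    (hy : y ∈ scaledSet A v γ (Λ : Set A)) : algebraMap K A π * y ∈ Λ := by
  induction hy using AddSubgroup.closure_induction with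
  | mem a ha =>
    obtain ⟨c, s, hs, hc, rfl⟩ := ha
    have hπc : 0 ≤ v (π * c) := by
      rw [hmul]
      calc (0 : WithTop Γ) ≤ (γ : WithTop Γ) + v c :=
            (WithTop.coe_neg_le_iff_zero_le_coe_add γ _).mp hc
        _ ≤ v π + v c := add_le_add_left hπ _
    rw [← mul_assoc, ← map_mul]
    exact Λ.mul_mem (hO _ hπc) hs
  | zero => rw [mul_zero]; exact Λ.zero_mem
  | add a b _ _ ha hb => rw [mul_add]; exact Λ.add_mem ha hb
  | neg a _ ha => rw [mul_neg]; exact Λ.neg_mem ha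

end scaledSet

theorem stmt13_general {K A Γ : Type*} [Field K] [Ring A] [Algebra K A]
    [AddCommGroup Γ] [LinearOrder Γ] [IsOrderedAddMonoid Γ]
    (v : K → WithTop Γ)
    (hmul : ∀ x y : K, v (x * y) = v x + v y)
    (hsurj : ∀ γ : Γ, ∃ x : K, v x = (γ : WithTop Γ))
    (Λ : Subring A)
    (hΛK : ∀ x : K, algebraMap K A x ∈ Λ ↔ (0 : WithTop Γ) ≤ v x) :
    ∀ (γ : Γ) (x : K),
      algebraMap K A x ∈ scaledSet A v γ (Λ : Set A) ↔ ((-γ : Γ) : WithTop Γ) ≤ v x := by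
  intro γ x
  refine ⟨fun hx => ?_, algebraMap_mem_scaledSet Λ.one_mem⟩
  obtain ⟨π, hπ⟩ := hsurj γ
  have hπx : algebraMap K A (π * x) ∈ Λ := by
    rw [map_mul]
    exact algebraMap_mul_mem_of_mem_scaledSet hmul (fun c => (hΛK c).mpr) hπ.ge hx
  rw [WithTop.coe_neg_le_iff_zero_le_coe_add, ← hπ, ← hmul]
  exact (hΛK _).mp hπx

/-- Let `v : K → Γ ∪ {∞}` be a surjective valuation on the field `K`, `A` a `K`-algebra and
`Λ ⊆ A` a subring with `Λ ∩ K = O_v` and `K·Λ = A`.  Then for every `γ ∈ Γ`,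
`F_γ^vA ∩ K = f_γ^vK`, where `F_γ^vA = (f_γ^vK)·Λ`. -/
theorem stmt13 {K A Γ : Type*} [Field K] [Ring A] [Algebra K A]
    [AddCommGroup Γ] [LinearOrder Γ] [IsOrderedAddMonoid Γ]
    (v : K → WithTop Γ)
    (h0 : ∀ x : K, v x = ⊤ ↔ x = 0)
    (hmul : ∀ x y : K, v (x * y) = v x + v y)
    (hadd : ∀ x y : K, min (v x) (v y) ≤ v (x + y))
    (hsurj : ∀ γ : Γ, ∃ x : K, v x = (γ : WithTop Γ))
    (Λ : Subring A)
    (hΛK : ∀ x : K, algebraMap K A x ∈ Λ ↔ (0 : WithTop Γ) ≤ v x)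
    (hKΛ : Submodule.span K (Λ : Set A) = ⊤) :
    ∀ (γ : Γ) (x : K),
      algebraMap K A x ∈ scaledSet A v γ (Λ : Set A) ↔ ((-γ : Γ) : WithTop Γ) ≤ v x :=
  stmt13_general v hmul hsurj Λ hΛK
end

section
/- Let K be a field with surjective valuation v : K → Γ ∪ {∞}, Λ a subring of a K-algebra A, and suppose Λ ∩ F is a submodule such that for n ∈ ℕ the sets F_nA form a filtration of A with Λ ∩ F_nA an O_v-lattice in F_nA. Then for all γ ∈ Γ and all n ∈ ℕ: (f_γ^v K)Λ ∩ F_nA = (f_γ^v K)(Λ ∩ F_nA). -/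
section ScaledSet

variable {K A Γ : Type*} [Field K] [Ring A] [Algebra K A]
  [AddCommGroup Γ] [LinearOrder Γ] [IsOrderedAddMonoid Γ] (v : K → WithTop Γ)

theorem algebraMap_mul_mem_scaledSet {γ : Γ} {S : Set A} {c : K} {s : A} (hs : s ∈ S)
    (hc : ((-γ : Γ) : WithTop Γ) ≤ v c) : algebraMap K A c * s ∈ scaledSet A v γ S :=
  AddSubgroup.subset_closure ⟨c, s, hs, hc, rfl⟩

theorem scaledSet_mono {γ : Γ} {S T : Set A} (h : S ⊆ T) :
    scaledSet A v γ S ≤ scaledSet A v γ T :=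
  AddSubgroup.closure_mono fun _ ⟨c, s, hs, hc, ha⟩ => ⟨c, s, h hs, hc, ha⟩

theorem scaledSet_le_toAddSubgroup {γ : Γ} {S : Set A} {M : Submodule K A} (h : S ⊆ M) :
    scaledSet A v γ S ≤ M.toAddSubgroup :=
  (AddSubgroup.closure_le _).mpr <| by
    rintro _ ⟨c, s, hs, -, rfl⟩
    rw [SetLike.mem_coe, Submodule.mem_toAddSubgroup, ← Algebra.smul_def]
    exact M.smul_mem c (h hs)

variable {v}

theorem valuation_inv_mul_nonneg (hmul : ∀ x y : K, v (x * y) = v x + v y) {γ : Γ} {c d : K}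
    (hd0 : d ≠ 0) (hd : v d = ((-γ : Γ) : WithTop Γ)) (hc : ((-γ : Γ) : WithTop Γ) ≤ v c) :
    0 ≤ v (d⁻¹ * c) := by
  have hvc : v c = v d + v (d⁻¹ * c) := by rw [← hmul, mul_inv_cancel_left₀ hd0]
  rw [hvc, hd, ← add_zero ((-γ : Γ) : WithTop Γ), add_assoc, zero_add] at hc
  exact (WithTop.add_le_add_iff_left WithTop.coe_ne_top).mp hc

theorem algebraMap_inv_mul_mem_of_mem_scaledSet (hmul : ∀ x y : K, v (x * y) = v x + v y)
    {Λ : Subring A} (hΛK : ∀ x : K, 0 ≤ v x → algebraMap K A x ∈ Λ) {γ : Γ} {d : K}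
    (hd0 : d ≠ 0) (hd : v d = ((-γ : Γ) : WithTop Γ)) {x : A}
    (hx : x ∈ scaledSet A v γ (Λ : Set A)) : algebraMap K A d⁻¹ * x ∈ Λ := by
  suffices scaledSet A v γ (Λ : Set A) ≤
      Λ.toAddSubgroup.comap (AddMonoidHom.mulLeft (algebraMap K A d⁻¹)) from this hx
  refine (AddSubgroup.closure_le _).mpr ?_
  rintro _ ⟨c, s, hs, hc, rfl⟩
  change algebraMap K A d⁻¹ * (algebraMap K A c * s) ∈ Λ
  rw [← mul_assoc, ← map_mul]
  exact Λ.mul_mem (hΛK _ (valuation_inv_mul_nonneg hmul hd0 hd hc)) hs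

end ScaledSet

theorem stmt14_general {K A Γ : Type*} [Field K] [Ring A] [Algebra K A]
    [AddCommGroup Γ] [LinearOrder Γ] [IsOrderedAddMonoid Γ]
    (v : K → WithTop Γ)
    (h0 : ∀ x : K, v x = ⊤ ↔ x = 0)
    (hmul : ∀ x y : K, v (x * y) = v x + v y)
    (hsurj : ∀ γ : Γ, ∃ x : K, v x = (γ : WithTop Γ))
    (F : ℕ → Submodule K A)
    (Λ : Subring A)
    (hΛK : ∀ x : K, algebraMap K A x ∈ Λ ↔ (0 : WithTop Γ) ≤ v x) :
    ∀ (γ : Γ) (n : ℕ),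
      (scaledSet A v γ (Λ : Set A) : Set A) ∩ (F n : Set A) =
        (scaledSet A v γ ((Λ : Set A) ∩ (F n : Set A)) : Set A) := by
  intro γ n
  obtain ⟨d, hd⟩ := hsurj (-γ)
  have hd0 : d ≠ 0 := by
    rintro rfl
    exact WithTop.coe_ne_top (hd.symm.trans ((h0 0).mpr rfl))
  ext x
  constructor
  · rintro ⟨hxΛ, hxF⟩
    have hy : algebraMap K A d⁻¹ * x ∈ (Λ : Set A) ∩ F n :=
      ⟨algebraMap_inv_mul_mem_of_mem_scaledSet hmul (fun c => (hΛK c).mpr) hd0 hd hxΛ,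
        by rw [← Algebra.smul_def]; exact (F n).smul_mem _ hxF⟩
    have hx : x = algebraMap K A d * (algebraMap K A d⁻¹ * x) := by
      rw [← mul_assoc, ← map_mul, mul_inv_cancel₀ hd0, map_one, one_mul]
    rw [hx]
    exact algebraMap_mul_mem_scaledSet v hy hd.ge
  · intro hx
    exact ⟨scaledSet_mono v Set.inter_subset_left hx,
      scaledSet_le_toAddSubgroup v Set.inter_subset_right hx⟩

/-- Let `v : K → Γ ∪ {∞}` be a surjective valuation, `A` a `K`-algebra with an exhaustive
`ℕ`-filtration `F_nA` by `K`-subspaces with `K ⊆ F_0A`, and `Λ ⊆ A` a subring with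
`Λ ∩ K = O_v` such that `Λ ∩ F_nA` is an `O_v`-lattice in `F_nA` for all `n` (an
`F`-reductor).  Then `(f_γ^vK)Λ ∩ F_nA = (f_γ^vK)(Λ ∩ F_nA)` for all `γ ∈ Γ`, `n ∈ ℕ`. -/
theorem stmt14 {K A Γ : Type*} [Field K] [Ring A] [Algebra K A]
    [AddCommGroup Γ] [LinearOrder Γ] [IsOrderedAddMonoid Γ]
    (v : K → WithTop Γ)
    (h0 : ∀ x : K, v x = ⊤ ↔ x = 0)
    (hmul : ∀ x y : K, v (x * y) = v x + v y)
    (hadd : ∀ x y : K, min (v x) (v y) ≤ v (x + y))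
    (hsurj : ∀ γ : Γ, ∃ x : K, v x = (γ : WithTop Γ))
    (F : ℕ → Submodule K A)
    (hFmono : Monotone F)
    (hFexh : ∀ a : A, ∃ n : ℕ, a ∈ F n)
    (hFmul : ∀ {m n : ℕ} {a b : A}, a ∈ F m → b ∈ F n → a * b ∈ F (m + n))
    (hFK : ∀ x : K, algebraMap K A x ∈ F 0)
    (Λ : Subring A)
    (hΛK : ∀ x : K, algebraMap K A x ∈ Λ ↔ (0 : WithTop Γ) ≤ v x)
    (hlat : ∀ n : ℕ,
      (∃ s : Set A, s ⊆ (Λ : Set A) ∩ (F n : Set A) ∧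
        LinearIndependent K ((↑) : s → A) ∧ Submodule.span K s = F n) ∧
      (∃ t : Finset A, (↑t : Set A) ⊆ (F n : Set A) ∧
        (Λ : Set A) ∩ (F n : Set A) ⊆ (scaledSet A v 0 (↑t : Set A) : Set A))) :
    ∀ (γ : Γ) (n : ℕ),
      (scaledSet A v γ (Λ : Set A) : Set A) ∩ (F n : Set A) =
        (scaledSet A v γ ((Λ : Set A) ∩ (F n : Set A)) : Set A) :=
  stmt14_general v h0 hmul hsurj F Λ hΛK
end

section
/- Let A be a filtered K-algebra with a finite positive filtration FA and Λ ⊆ A an F-reductor. Then m_v(Λ ∩ F_nA) = m_vΛ ∩ F_nA for all n ∈ ℕ, where m_v is the maximal ideal of the valuation ring O_v = Λ ∩ K. -/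
/-- The additive subgroup `m_v·S` generated by products `c·s` with `c ∈ m_v = {c : v c > 0}`
(the maximal ideal of the valuation ring `O_v` of `v`) and `s ∈ S`. -/
def mvScaledSet {K : Type*} (A : Type*) {Γ : Type*} [Field K] [Ring A] [Algebra K A]
    [AddCommGroup Γ] [LinearOrder Γ] [IsOrderedAddMonoid Γ] (v : K → WithTop Γ) (S : Set A) : AddSubgroup A :=
  AddSubgroup.closure {a | ∃ c : K, ∃ s ∈ S, (0 : WithTop Γ) < v c ∧
    a = algebraMap K A c * s}

section ValuationFunction

variable {K Γ : Type*} [Field K] [AddCommGroup Γ] [LinearOrder Γ] [IsOrderedAddMonoid Γ]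
  {v : K → WithTop Γ}

lemma exists_eq_mul_of_val_le (h0 : ∀ x : K, v x = ⊤ ↔ x = 0)
    (hmul : ∀ x y : K, v (x * y) = v x + v y) {d d' : K} (hle : v d ≤ v d') :
    ∃ c : K, 0 ≤ v c ∧ d' = d * c := by
  by_cases hd : d = 0
  · have hd' : d' = 0 := (h0 d').mp (top_le_iff.mp ((h0 d).mpr hd ▸ hle))
    exact ⟨0, ((h0 0).mpr rfl).symm ▸ le_top, by simp [hd, hd']⟩
  · have hdd : d * (d' / d) = d' := by field_simp
    refine ⟨d' / d, ?_, hdd.symm⟩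
    have hval : v d + 0 ≤ v d + v (d' / d) := by rwa [add_zero, ← hmul, hdd]
    exact (WithTop.add_le_add_iff_left ((h0 d).not.mpr hd)).mp hval

end ValuationFunction

section MvScaledSet

variable {K A Γ : Type*} [Field K] [Ring A] [Algebra K A]
  [AddCommGroup Γ] [LinearOrder Γ] [IsOrderedAddMonoid Γ] (v : K → WithTop Γ)

lemma mul_mem_mvScaledSet {S : Set A} {d : K} (hd : 0 < v d) {y : A} (hy : y ∈ S) :
    algebraMap K A d * y ∈ mvScaledSet A v S :=
  AddSubgroup.subset_closure ⟨d, y, hy, hd, rfl⟩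

lemma mvScaledSet_mono {S T : Set A} (hST : S ⊆ T) : mvScaledSet A v S ≤ mvScaledSet A v T :=
  AddSubgroup.closure_mono fun _ ⟨c, s, hs, hc, hx⟩ ↦ ⟨c, s, hST hs, hc, hx⟩

lemma mvScaledSet_le_submodule {S : Set A} {V : Submodule K A} (hSV : S ⊆ V) :
    mvScaledSet A v S ≤ V.toAddSubgroup := by
  rw [mvScaledSet, AddSubgroup.closure_le]
  rintro _ ⟨c, s, hs, -, rfl⟩
  rw [SetLike.mem_coe, Submodule.mem_toAddSubgroup, ← Algebra.smul_def]
  exact V.smul_mem c (hSV hs)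

lemma mem_mvScaledSet_iff (h0 : ∀ x : K, v x = ⊤ ↔ x = 0)
    (hmul : ∀ x y : K, v (x * y) = v x + v y) (S : AddSubgroup A)
    (hS : ∀ c : K, 0 ≤ v c → ∀ s ∈ S, algebraMap K A c * s ∈ S) {x : A} :
    x ∈ mvScaledSet A v S ↔ ∃ d : K, 0 < v d ∧ ∃ y ∈ S, x = algebraMap K A d * y := by
  refine ⟨fun hx ↦ ?_, fun ⟨d, hd, y, hy, hx⟩ ↦ hx ▸ mul_mem_mvScaledSet v hd hy⟩
  induction hx using AddSubgroup.closure_induction with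
  | mem _ hx => obtain ⟨c, s, hs, hc, rfl⟩ := hx; exact ⟨c, hc, s, hs, rfl⟩
  | zero => exact ⟨0, (h0 0).mpr rfl ▸ WithTop.coe_lt_top 0, 0, S.zero_mem, by simp⟩
  | neg _ _ ih =>
    obtain ⟨d, hd, y, hy, rfl⟩ := ih
    exact ⟨d, hd, -y, S.neg_mem hy, (mul_neg _ _).symm⟩
  | add _ _ _ _ ih ih' =>
    obtain ⟨d, hd, y, hy, rfl⟩ := ih
    obtain ⟨d', hd', y', hy', rfl⟩ := ih'
    rcases le_total (v d) (v d') with hle | hle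
    · obtain ⟨c, hc, rfl⟩ := exists_eq_mul_of_val_le h0 hmul hle
      refine ⟨d, hd, y + algebraMap K A c * y', S.add_mem hy (hS c hc y' hy'), ?_⟩
      rw [mul_add, map_mul, mul_assoc]
    · obtain ⟨c, hc, rfl⟩ := exists_eq_mul_of_val_le h0 hmul hle
      refine ⟨d', hd', algebraMap K A c * y + y', S.add_mem (hS c hc y hy) hy', ?_⟩
      rw [mul_add, map_mul, mul_assoc]

lemma mvScaledSet_inter_submodule (h0 : ∀ x : K, v x = ⊤ ↔ x = 0)
    (hmul : ∀ x y : K, v (x * y) = v x + v y) (S : AddSubgroup A)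
    (hS : ∀ c : K, 0 ≤ v c → ∀ s ∈ S, algebraMap K A c * s ∈ S) (V : Submodule K A) :
    (mvScaledSet A v ((S : Set A) ∩ V) : Set A) = (mvScaledSet A v S : Set A) ∩ V := by
  refine subset_antisymm (fun x hx ↦ ⟨mvScaledSet_mono v Set.inter_subset_left hx,
    mvScaledSet_le_submodule v Set.inter_subset_right hx⟩) ?_
  rintro x ⟨hx, hxV⟩
  obtain ⟨d, hd, y, hy, rfl⟩ := (mem_mvScaledSet_iff v h0 hmul S hS).mp hx
  by_cases hd0 : d = 0
  · simp [hd0, zero_mem]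
  · have hyV : y ∈ V := by
      simpa [← Algebra.smul_def, smul_smul, inv_mul_cancel₀ hd0] using V.smul_mem d⁻¹ hxV
    exact mul_mem_mvScaledSet v hd ⟨hy, hyV⟩

end MvScaledSet

theorem stmt15_general {K A Γ : Type*} [Field K] [Ring A] [Algebra K A]
    [AddCommGroup Γ] [LinearOrder Γ] [IsOrderedAddMonoid Γ]
    (v : K → WithTop Γ)
    (h0 : ∀ x : K, v x = ⊤ ↔ x = 0)
    (hmul : ∀ x y : K, v (x * y) = v x + v y)
    (F : ℕ → Submodule K A)
    (Λ : Subring A)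
    (hΛK : ∀ x : K, algebraMap K A x ∈ Λ ↔ (0 : WithTop Γ) ≤ v x) :
    ∀ n : ℕ,
      (mvScaledSet A v ((Λ : Set A) ∩ (F n : Set A)) : Set A) =
        (mvScaledSet A v (Λ : Set A) : Set A) ∩ (F n : Set A) := fun n ↦
  mvScaledSet_inter_submodule v h0 hmul Λ.toAddSubgroup
    (fun c hc _ hs ↦ Λ.mul_mem ((hΛK c).mpr hc) hs) (F n)

/-- Let `A` be a `K`-algebra with a finite positive filtration `FA` and `Λ ⊆ A` an
`F`-reductor.  Then `m_v(Λ ∩ F_nA) = m_vΛ ∩ F_nA` for all `n ∈ ℕ`. -/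
theorem stmt15 {K A Γ : Type*} [Field K] [Ring A] [Algebra K A]
    [AddCommGroup Γ] [LinearOrder Γ] [IsOrderedAddMonoid Γ]
    (v : K → WithTop Γ)
    (h0 : ∀ x : K, v x = ⊤ ↔ x = 0)
    (hmul : ∀ x y : K, v (x * y) = v x + v y)
    (hadd : ∀ x y : K, min (v x) (v y) ≤ v (x + y))
    (hsurj : ∀ γ : Γ, ∃ x : K, v x = (γ : WithTop Γ))
    (F : ℕ → Submodule K A)
    (hFmono : Monotone F)
    (hFexh : ∀ a : A, ∃ n : ℕ, a ∈ F n)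
    (hFmul : ∀ {m n : ℕ} {a b : A}, a ∈ F m → b ∈ F n → a * b ∈ F (m + n))
    (hFK : ∀ x : K, algebraMap K A x ∈ F 0)
    (hFfin : ∀ n : ℕ, FiniteDimensional K (F n))
    (Λ : Subring A)
    (hΛK : ∀ x : K, algebraMap K A x ∈ Λ ↔ (0 : WithTop Γ) ≤ v x)
    (hlat : ∀ n : ℕ,
      (∃ s : Set A, s ⊆ (Λ : Set A) ∩ (F n : Set A) ∧
        LinearIndependent K ((↑) : s → A) ∧ Submodule.span K s = F n) ∧
      (∃ t : Finset A, (↑t : Set A) ⊆ (F n : Set A) ∧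
        (Λ : Set A) ∩ (F n : Set A) ⊆ (scaledSet A v 0 (↑t : Set A) : Set A))) :
    ∀ n : ℕ,
      (mvScaledSet A v ((Λ : Set A) ∩ (F n : Set A)) : Set A) =
        (mvScaledSet A v (Λ : Set A) : Set A) ∩ (F n : Set A) :=
  stmt15_general v h0 hmul F Λ hΛK
end
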